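/- Let R = F_1 × ... × F_n be a finite product of finite fields with |F_1| ≥ ... ≥ |F_n| and |F_1| > 3. Then the minimum vertex degree of the Jacobson graph of R equals |R|/|F_1| - 1, attained at the vertex e_1. -/

import Mathlib

/-- The Jacobson graph of a product of fields: vertices are the nonzero
elements, two distinct vertices are adjacent iff `1 - x*y` is not a unit. -/
def jacGraph {ι : Type*} (F : ι → Type*) [∀ i, Field (F i)] :
    SimpleGraph {x : ∀ i, F i // x ≠ 0} where
  Adj x y := x ≠ y ∧ ¬ IsUnit (1 - (x : ∀ i, F i) * y)
  symm := by
    constructor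
    rintro x y ⟨hxy, hu⟩
    exact ⟨hxy.symm, by rwa [mul_comm]⟩
  loopless := by constructor; rintro x ⟨h, _⟩; exact h rfl

/-!
Two nonzero vertices `x, y` are adjacent exactly when `x i * y i = 1` in some coordinate `i`.
The neighbours of `e = Pi.single i₀ 1` are therefore the vertices with `i₀`-coordinate `1`,
other than `e` itself: `|R| / |F i₀| - 1` of them. Any vertex `v` has some coordinate `v j ≠ 0`,
and every vertex `y ≠ v` with `y j = (v j)⁻¹` is a neighbour of `v`; there are at least
`|R| / |F j| - 1 ≥ |R| / |F i₀| - 1` of these, since `F i₀` is the largest field.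
-/

lemma Nat.card_pi_eq_card_mul_card_subtype_eval {ι : Type*} [DecidableEq ι] (β : ι → Type*)
    (j : ι) (c : β j) :
    Nat.card (∀ i, β i) = Nat.card (β j) * Nat.card {f : ∀ i, β i // f j = c} := by
  have hfiber : {f : ∀ i, β i // f j = c} ≃ {b : β j // b = c} × ∀ i : {i // i ≠ j}, β i :=
    ((Equiv.piSplitAt j β).subtypeEquiv (q := fun p => p.1 = c) fun _ => Iff.rfl).trans
      (Equiv.prodSubtypeFstEquivSubtypeProd (p := (· = c)))
  rw [Nat.card_congr (Equiv.piSplitAt j β), Nat.card_prod, Nat.card_congr hfiber, Nat.card_prod,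
    Nat.card_unique (α := {b : β j // b = c}), one_mul]

section

variable {ι : Type*} (F : ι → Type*) [∀ i, Field (F i)]

lemma jacGraph_adj_iff (x y : {x : ∀ i, F i // x ≠ 0}) :
    (jacGraph F).Adj x y ↔ x ≠ y ∧ ∃ i, (x : ∀ i, F i) i * (y : ∀ i, F i) i = 1 := by
  show (x ≠ y ∧ ¬ IsUnit (1 - (x : ∀ i, F i) * y)) ↔ _
  simp only [Pi.isUnit_iff, isUnit_iff_ne_zero, Pi.sub_apply, Pi.one_apply, Pi.mul_apply,
    sub_ne_zero, not_forall, not_not, eq_comm (a := (1 : F _))]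

lemma ncard_setOf_eval_eq [Fintype ι] [DecidableEq ι] [∀ i, Fintype (F i)] (j : ι) {c : F j}
    (hc : c ≠ 0) :
    {y : {x : ∀ i, F i // x ≠ 0} | (y : ∀ i, F i) j = c}.ncard
      = Fintype.card (∀ i, F i) / Fintype.card (F j) := by
  have hfiber : {y : {x : ∀ i, F i // x ≠ 0} | (y : ∀ i, F i) j = c}
      ≃ {f : ∀ i, F i // f j = c} :=
    Equiv.subtypeSubtypeEquivSubtype (q := fun f : ∀ i, F i => f j = c) fun {f} hf h =>
      hc (by rw [← hf, h, Pi.zero_apply])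
  rw [← Nat.card_coe_set_eq, Nat.card_congr hfiber, ← Nat.card_eq_fintype_card,
    ← Nat.card_eq_fintype_card, Nat.card_pi_eq_card_mul_card_subtype_eval F j c,
    Nat.mul_div_cancel_left _ Nat.card_pos]

lemma jacGraph_neighborSet_of_eq_single [DecidableEq ι] (i₀ : ι) (e : {x : ∀ i, F i // x ≠ 0})
    (he : (e : ∀ i, F i) = Pi.single i₀ 1) :
    (jacGraph F).neighborSet e
      = {y : {x : ∀ i, F i // x ≠ 0} | (y : ∀ i, F i) i₀ = 1} \ {e} := by
  ext y
  simp only [SimpleGraph.mem_neighborSet, jacGraph_adj_iff, he, Set.mem_sdiff,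
    Set.mem_ofPred_eq, Set.mem_singleton_iff]
  constructor
  · rintro ⟨hne, i, hi⟩
    rcases eq_or_ne i i₀ with rfl | h
    · rw [Pi.single_eq_same, one_mul] at hi
      exact ⟨hi, hne.symm⟩
    · rw [Pi.single_eq_of_ne h, zero_mul] at hi
      exact absurd hi zero_ne_one
  · rintro ⟨h1, hne⟩
    exact ⟨Ne.symm hne, i₀, by rw [Pi.single_eq_same, one_mul, h1]⟩

lemma ncard_jacGraph_neighborSet_of_eq_single [Fintype ι] [DecidableEq ι] [∀ i, Fintype (F i)]
    (i₀ : ι) (e : {x : ∀ i, F i // x ≠ 0}) (he : (e : ∀ i, F i) = Pi.single i₀ 1) :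
    ((jacGraph F).neighborSet e).ncard = Fintype.card (∀ i, F i) / Fintype.card (F i₀) - 1 := by
  have he₀ : e ∈ {y : {x : ∀ i, F i // x ≠ 0} | (y : ∀ i, F i) i₀ = 1} := by
    simp [he]
  rw [jacGraph_neighborSet_of_eq_single F i₀ e he, Set.ncard_sdiff_singleton_of_mem he₀,
    ncard_setOf_eval_eq F i₀ one_ne_zero]

lemma setOf_eval_eq_inv_sdiff_subset_jacGraph_neighborSet (v : {x : ∀ i, F i // x ≠ 0}) {j : ι}
    (hvj : (v : ∀ i, F i) j ≠ 0) :
    {y : {x : ∀ i, F i // x ≠ 0} | (y : ∀ i, F i) j = ((v : ∀ i, F i) j)⁻¹} \ {v}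
      ⊆ (jacGraph F).neighborSet v := by
  rintro y ⟨hy, hyv⟩
  rw [SimpleGraph.mem_neighborSet, jacGraph_adj_iff]
  exact ⟨fun h => hyv h.symm, j, by rw [hy, mul_inv_cancel₀ hvj]⟩

lemma exists_card_div_card_sub_one_le_ncard_jacGraph_neighborSet [Fintype ι] [DecidableEq ι]
    [∀ i, Fintype (F i)] (v : {x : ∀ i, F i // x ≠ 0}) :
    ∃ j, Fintype.card (∀ i, F i) / Fintype.card (F j) - 1
      ≤ ((jacGraph F).neighborSet v).ncard := by
  obtain ⟨j, hvj⟩ : ∃ j, (v : ∀ i, F i) j ≠ 0 := Function.ne_iff.mp v.2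
  refine ⟨j, ?_⟩
  set s := {y : {x : ∀ i, F i // x ≠ 0} | (y : ∀ i, F i) j = ((v : ∀ i, F i) j)⁻¹}
  have hs : s.ncard = Fintype.card (∀ i, F i) / Fintype.card (F j) :=
    ncard_setOf_eval_eq F j (inv_ne_zero hvj)
  have hdiff : s.ncard ≤ (s \ {v}).ncard + 1 := by
    simpa using Set.ncard_le_ncard_sdiff_add_ncard s {v}
  have hsub : (s \ {v}).ncard ≤ ((jacGraph F).neighborSet v).ncard :=
    Set.ncard_le_ncard (setOf_eval_eq_inv_sdiff_subset_jacGraph_neighborSet F v hvj)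
  omega

end

theorem jacGraph_minDegree_general
    {ι : Type*} [Fintype ι] [DecidableEq ι] (F : ι → Type*)
    [∀ i, Field (F i)] [∀ i, Fintype (F i)]
    (i₀ : ι) (hmax : ∀ i, Fintype.card (F i) ≤ Fintype.card (F i₀))
    (e : {x : ∀ i, F i // x ≠ 0}) (he : (e : ∀ i, F i) = Pi.single i₀ 1) :
    ((jacGraph F).neighborSet e).ncard =
        Fintype.card (∀ i, F i) / Fintype.card (F i₀) - 1 ∧
      ∀ v : {x : ∀ i, F i // x ≠ 0},
        ((jacGraph F).neighborSet e).ncard ≤ ((jacGraph F).neighborSet v).ncard := by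
  have hdeg := ncard_jacGraph_neighborSet_of_eq_single F i₀ e he
  refine ⟨hdeg, fun v => ?_⟩
  obtain ⟨j, hj⟩ := exists_card_div_card_sub_one_le_ncard_jacGraph_neighborSet F v
  have hdiv : Fintype.card (∀ i, F i) / Fintype.card (F i₀)
      ≤ Fintype.card (∀ i, F i) / Fintype.card (F j) :=
    Nat.div_le_div_left (hmax j) Fintype.card_pos
  omega

theorem jacGraph_minDegree
    {ι : Type*} [Fintype ι] [DecidableEq ι] (F : ι → Type*)
    [∀ i, Field (F i)] [∀ i, Fintype (F i)]
    (i₀ : ι) (hmax : ∀ i, Fintype.card (F i) ≤ Fintype.card (F i₀))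
    (hbig : 3 < Fintype.card (F i₀))
    (e : {x : ∀ i, F i // x ≠ 0}) (he : (e : ∀ i, F i) = Pi.single i₀ 1) :
    ((jacGraph F).neighborSet e).ncard =
        Fintype.card (∀ i, F i) / Fintype.card (F i₀) - 1 ∧
      ∀ v : {x : ∀ i, F i // x ≠ 0},
        ((jacGraph F).neighborSet e).ncard ≤ ((jacGraph F).neighborSet v).ncard :=
  jacGraph_minDegree_general F i₀ hmax e he
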